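/- Let j, k, n be positive integers with j < n and j ≤ k, and let p₀, …, p_k ∈ ℝ^{1,n} be points such that dim V(p₀,…,p_k) = dim V(p₀,…,p_j) = j. Then the Lorentzian distance-squared mapping L_{(p₀,…,p_k)} : ℝ^{1,n} → ℝ^{k+1} is A-equivalent to τ_{(j,k)} ∘ Φ_{j+1} if and only if V(p₀,…,p_k) is time-like. -/

import Mathlib

/-!
Put `p₀` at the origin and write `q(y) = ⟨y, y⟩`, `vᵢ = pᵢ - p₀` and `V` for the recognition
subspace: then `L(y + p₀)ᵢ = q(y) - 2⟨y, vᵢ⟩ + q(vᵢ)`.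

If `V` is time-like, every nonzero vector orthogonal to a time-like one is space-like, so `V`
is nondegenerate and `q` is positive definite on `V^⊥`. In coordinates `y` sending the first
`j` axes to `V` and the others to an orthonormal basis of `V^⊥`, `q` splits as a quadratic form
in `y₀, …, y_{j-1}` plus `y_j² + ⋯ + y_n²`, and the `⟨y, vᵢ⟩` depend only on
`y₀, …, y_{j-1}`. Hence `L` is `τ ∘ Φ` followed by a polynomial diffeomorphism of the target:
a shear putting the quadratic form into coordinate `j`, then an invertible affine map.

If `V` is not time-like, `V^⊥` contains a nonzero light-like `u`: either in `V ∩ V^⊥`, or, when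
`ℝ^{1,n} = V ⊕ V^⊥`, a combination of a time-like vector of `V^⊥` with a space-like one
orthogonal to it and to `V` (this needs `dim V < n`). Then `L` is constant on the line
`p₀ + ℝu`, so it has a non-compact fibre, while all fibres of `τ ∘ Φ` are compact and
`𝒜`-equivalence preserves compactness of fibres.
-/

/-- A `C^∞` diffeomorphism of a normed space onto itself. -/
def IsSmoothDiffeo {E : Type*} [NormedAddCommGroup E] [NormedSpace ℝ E] (φ : E → E) : Prop :=
  ContDiff ℝ (⊤ : ℕ∞) φ ∧
    ∃ φi : E → E, ContDiff ℝ (⊤ : ℕ∞) φi ∧ (∀ x, φi (φ x) = x) ∧ (∀ y, φ (φi y) = y)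

/-- `f` and `g` are `𝒜`-equivalent: `ψ ∘ f ∘ φ = g` for some `C^∞` diffeomorphisms
`φ` of the source and `ψ` of the target. -/
def AEquiv {E F : Type*} [NormedAddCommGroup E] [NormedSpace ℝ E]
    [NormedAddCommGroup F] [NormedSpace ℝ F] (f g : E → F) : Prop :=
  ∃ (φ : E → E) (ψ : F → F), IsSmoothDiffeo φ ∧ IsSmoothDiffeo ψ ∧ ψ ∘ f ∘ φ = g

/-- The Lorentzian inner product `⟨x,y⟩ = -x₀y₀ + x₁y₁ + ⋯ + xₙyₙ` on `ℝ^{1,n}`. -/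
def lorentz {n : ℕ} (x y : Fin (n + 1) → ℝ) : ℝ :=
  -(x 0 * y 0) + ∑ i : Fin n, x i.succ * y i.succ

/-- The Lorentzian distance-squared mapping
`L_{(p₀,…,p_k)}(x) = (⟨x-p₀,x-p₀⟩, …, ⟨x-p_k,x-p_k⟩)`. -/
def lorentzDistSqMap {n k : ℕ} (p : Fin (k + 1) → (Fin (n + 1) → ℝ))
    (x : Fin (n + 1) → ℝ) : Fin (k + 1) → ℝ :=
  fun i => lorentz (x - p i) (x - p i)

/-- The recognition subspace `V(p₀,…,p_k)`, the span of `p₁ - p₀, …, p_k - p₀`. -/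
def recSub {n k : ℕ} (p : Fin (k + 1) → (Fin (n + 1) → ℝ)) : Submodule ℝ (Fin (n + 1) → ℝ) :=
  Submodule.span ℝ (Set.range fun i : Fin k => p i.succ - p 0)

/-- A subspace of `ℝ^{1,n}` is time-like if it contains a time-like vector. -/
def TimeLike {n : ℕ} (W : Submodule ℝ (Fin (n + 1) → ℝ)) : Prop :=
  ∃ v ∈ W, lorentz v v < 0

/-- A subspace of `ℝ^{1,n}` is space-like if every nonzero vector in it is space-like. -/
def SpaceLike {n : ℕ} (W : Submodule ℝ (Fin (n + 1) → ℝ)) : Prop :=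
  ∀ v ∈ W, v ≠ 0 → 0 < lorentz v v

/-- A subspace of `ℝ^{1,n}` is light-like if it is neither time-like nor space-like. -/
def LightLike {n : ℕ} (W : Submodule ℝ (Fin (n + 1) → ℝ)) : Prop :=
  ¬ TimeLike W ∧ ¬ SpaceLike W

open Module

section SmoothDiffeo

variable {E F : Type*} [NormedAddCommGroup E] [NormedSpace ℝ E]
  [NormedAddCommGroup F] [NormedSpace ℝ F]

theorem IsSmoothDiffeo.comp {φ ψ : E → E} (hφ : IsSmoothDiffeo φ) (hψ : IsSmoothDiffeo ψ) :
    IsSmoothDiffeo (φ ∘ ψ) := by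
  obtain ⟨hφ, φi, hφi, hφl, hφr⟩ := hφ
  obtain ⟨hψ, ψi, hψi, hψl, hψr⟩ := hψ
  exact ⟨hφ.comp hψ, ψi ∘ φi, hψi.comp hφi, fun x => by simp [hφl, hψl],
    fun y => by simp [hφr, hψr]⟩

theorem isSmoothDiffeo_add_const (c : E) : IsSmoothDiffeo (· + c) :=
  ⟨contDiff_id.add contDiff_const, (· - c), contDiff_id.sub contDiff_const,
    fun x => add_sub_cancel_right x c, fun x => sub_add_cancel x c⟩

theorem LinearEquiv.isSmoothDiffeo [FiniteDimensional ℝ E] (e : E ≃ₗ[ℝ] E) :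
    IsSmoothDiffeo e :=
  let e' := e.toContinuousLinearEquiv
  ⟨e'.contDiff, e'.symm, e'.symm.contDiff, e'.symm_apply_apply, e'.apply_symm_apply⟩

/-- The inverse is `y ↦ y - G y`. -/
theorem isSmoothDiffeo_add_of_invariant {G : E → E} (hG : ContDiff ℝ (⊤ : ℕ∞) G)
    (hinv : ∀ x y, G (x + G y) = G x) : IsSmoothDiffeo fun x => x + G x := by
  refine ⟨contDiff_id.add hG, fun y => y - G y, contDiff_id.sub hG, fun x => ?_, fun y => ?_⟩
  · simp only [hinv x x, add_sub_cancel_right]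
  · have := hinv (y - G y) y
    rw [sub_add_cancel] at this
    simp only [← this, sub_add_cancel]

theorem isSmoothDiffeo_add_single {ι : Type*} [Fintype ι] [DecidableEq ι] (i₀ : ι)
    {f : (ι → ℝ) → ℝ} (hf : ContDiff ℝ (⊤ : ℕ∞) f)
    (hinv : ∀ Z c, f (Z + Pi.single i₀ c) = f Z) :
    IsSmoothDiffeo fun Z => Z + Pi.single i₀ (f Z) :=
  isSmoothDiffeo_add_of_invariant
    ((ContinuousLinearMap.single ℝ (fun _ => ℝ) i₀).contDiff.comp hf)
    fun Z Z' => by simp only [hinv]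

theorem AEquiv.of_comp_eq_comp {f g : E → F} {φ : E → E} {Ψ : F → F}
    (hφ : IsSmoothDiffeo φ) (hΨ : IsSmoothDiffeo Ψ) (h : f ∘ φ = Ψ ∘ g) : AEquiv f g := by
  obtain ⟨hΨ, Ψi, hΨi, hl, hr⟩ := hΨ
  refine ⟨φ, Ψi, hφ, ⟨hΨi, Ψ, hΨ, hr, hl⟩, ?_⟩
  rw [h]
  exact funext fun x => hl (g x)

theorem AEquiv.isCompact_preimage_singleton {f g : E → F} (h : AEquiv f g)
    (hg : ∀ z, IsCompact (g ⁻¹' {z})) (y : F) : IsCompact (f ⁻¹' {y}) := by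
  obtain ⟨φ, ψ, ⟨hφ, φi, -, -, hφr⟩, ⟨-, ψi, -, hψl, -⟩, rfl⟩ := h
  have : f ⁻¹' {y} = φ '' ((ψ ∘ f ∘ φ) ⁻¹' {ψ y}) := by
    ext x
    refine ⟨fun hx => ⟨φi x, by simp_all, hφr x⟩, ?_⟩
    rintro ⟨x, hx, rfl⟩
    simpa [hψl] using congrArg ψi hx
  rw [this]
  exact (hg _).image hφ.continuous

end SmoothDiffeo

theorem LinearMap.BilinForm.mem_orthogonal_span_range_iff {E ι : Type*} [AddCommGroup E]
    [Module ℝ E] {B : LinearMap.BilinForm ℝ E} {w : ι → E} {x : E} :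
    x ∈ B.orthogonal (Submodule.span ℝ (Set.range w)) ↔ ∀ m, B (w m) x = 0 := by
  change Submodule.span ℝ (Set.range w) ≤ LinearMap.ker (B.flip x) ↔ _
  simp [Submodule.span_le, Set.range_subset_iff]

theorem LinearMap.BilinForm.exists_orthonormal_of_pos {E : Type*} [AddCommGroup E]
    [Module ℝ E] [FiniteDimensional ℝ E] {B : LinearMap.BilinForm ℝ E} (hB : B.IsSymm)
    {W : Submodule ℝ E} (hW : ∀ x ∈ W, x ≠ 0 → 0 < B x x) {ι : Type*} [Fintype ι]
    [DecidableEq ι] (hι : Fintype.card ι = finrank ℝ W) :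
    ∃ e : ι → E, (∀ i, e i ∈ W) ∧ ∀ i i', B (e i) (e i') = if i = i' then 1 else 0 := by
  obtain ⟨b, hb⟩ := LinearMap.BilinForm.exists_orthogonal_basis
    (LinearMap.BilinForm.isSymm_iff.1 (hB.restrict W))
  let v : ι → E := fun i => b (Fintype.equivFinOfCardEq hι i)
  have hpos : ∀ i, 0 < B (v i) (v i) := fun i =>
    hW _ (Subtype.prop _) (by simpa [v] using b.ne_zero _)
  refine ⟨fun i => (√(B (v i) (v i)))⁻¹ • v i, fun i => W.smul_mem _ (Subtype.prop _),
    fun i i' => ?_⟩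
  simp only [map_smul, LinearMap.smul_apply, smul_eq_mul]
  split_ifs with h
  · subst h
    rw [← mul_assoc, ← mul_inv, Real.mul_self_sqrt (hpos i).le, inv_mul_cancel₀ (hpos i).ne']
  · have : B (v i) (v i') = 0 := hb ((Fintype.equivFinOfCardEq hι).injective.ne h)
    simp [this]

def lorentzForm (n : ℕ) : LinearMap.BilinForm ℝ (Fin (n + 1) → ℝ) :=
  LinearMap.mk₂ ℝ lorentz
    (fun x y z => by simp only [lorentz, Pi.add_apply, add_mul, Finset.sum_add_distrib]; ring)
    (fun c x y => by
      simp only [lorentz, Pi.smul_apply, smul_eq_mul, mul_assoc, ← Finset.mul_sum]; ring)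
    (fun x y z => by simp only [lorentz, Pi.add_apply, mul_add, Finset.sum_add_distrib]; ring)
    (fun c x y => by
      simp only [lorentz, Pi.smul_apply, smul_eq_mul, mul_left_comm _ c, ← Finset.mul_sum]; ring)

local notation "⟪" x ", " y "⟫ₗ" => lorentzForm _ x y

section LorentzForm

variable {n : ℕ}

theorem lorentzForm_apply (x y : Fin (n + 1) → ℝ) : ⟪x, y⟫ₗ = lorentz x y := rfl

theorem lorentzForm_comm (x y : Fin (n + 1) → ℝ) : ⟪x, y⟫ₗ = ⟪y, x⟫ₗ := by
  simp only [lorentzForm_apply, lorentz, mul_comm]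

theorem lorentzForm_isRefl : (lorentzForm n).IsRefl := fun x y h => by rwa [lorentzForm_comm]

theorem lorentzForm_single_zero : ⟪(Pi.single 0 1 : Fin (n + 1) → ℝ), Pi.single 0 1⟫ₗ = -1 := by
  simp [lorentzForm_apply, lorentz, Fin.succ_ne_zero]

theorem lorentzForm_nondegenerate : (lorentzForm n).Nondegenerate := by
  refine (LinearMap.IsRefl.nondegenerate_iff_separatingLeft lorentzForm_isRefl).2 fun x hx => ?_
  funext i
  have := hx (Pi.single i 1)
  cases i using Fin.cases with
  | zero => simpa [lorentzForm_apply, lorentz, Fin.succ_ne_zero] using this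
  | succ i => simpa [lorentzForm_apply, lorentz, Pi.single_apply] using this

theorem contDiff_lorentzForm_self :
    ContDiff ℝ (⊤ : ℕ∞) fun x : Fin (n + 1) → ℝ => ⟪x, x⟫ₗ := by
  simp only [lorentzForm_apply, lorentz]
  fun_prop

theorem lorentzForm_self_pos_of_apply_zero {x : Fin (n + 1) → ℝ} (hx0 : x 0 = 0)
    (hx : x ≠ 0) : 0 < ⟪x, x⟫ₗ := by
  obtain ⟨i, hi⟩ : ∃ i : Fin n, x i.succ ≠ 0 := by
    by_contra! h
    exact hx (funext (Fin.cases hx0 h))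
  simp only [lorentzForm_apply, lorentz, hx0, mul_zero, neg_zero, zero_add]
  exact Finset.sum_pos' (fun i _ => mul_self_nonneg _) ⟨i, Finset.mem_univ _, mul_self_pos.2 hi⟩

theorem lorentzForm_self_pos_of_orthogonal {b s : Fin (n + 1) → ℝ} (hb : ⟪b, b⟫ₗ < 0)
    (hbs : ⟪b, s⟫ₗ = 0) (hs : s ≠ 0) : 0 < ⟪s, s⟫ₗ := by
  by_contra! hss
  have hsb : ⟪s, b⟫ₗ = 0 := by rw [lorentzForm_comm]; exact hbs
  have hb0 : b 0 ≠ 0 := fun h =>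
    (lorentzForm_self_pos_of_apply_zero h (by rintro rfl; simp at hb)).not_gt hb
  -- `u` lies in the hyperplane `x₀ = 0`, where the form is positive definite
  set u := s 0 • b - b 0 • s
  have huu : ⟪u, u⟫ₗ = s 0 ^ 2 * ⟪b, b⟫ₗ + b 0 ^ 2 * ⟪s, s⟫ₗ := by
    simp only [u, map_sub, map_smul, LinearMap.sub_apply, LinearMap.smul_apply, smul_eq_mul,
      hbs, hsb]
    ring
  have hu : u = 0 := by
    by_contra hu
    have hu0 : u 0 = 0 := by simp only [u, Pi.sub_apply, Pi.smul_apply, smul_eq_mul]; ring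
    have := lorentzForm_self_pos_of_apply_zero hu0 hu
    nlinarith [mul_nonpos_of_nonneg_of_nonpos (sq_nonneg (s 0)) hb.le,
      mul_nonpos_of_nonneg_of_nonpos (sq_nonneg (b 0)) hss]
  have hs0 : s 0 = 0 := by
    have h := congrArg (⟪·, b⟫ₗ) hu
    simp only [u, map_sub, map_smul, LinearMap.sub_apply, LinearMap.smul_apply, smul_eq_mul,
      hsb, mul_zero, sub_zero, map_zero, LinearMap.zero_apply] at h
    exact (mul_eq_zero.1 h).resolve_right hb.ne
  exact hs (by simpa [u, hs0, hb0] using hu)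

theorem exists_lorentzForm_self_eq_zero_of_orthogonal {b s : Fin (n + 1) → ℝ}
    (hb : ⟪b, b⟫ₗ < 0) (hbs : ⟪b, s⟫ₗ = 0) (hs : s ≠ 0) :
    ∃ α β : ℝ, α • b + β • s ≠ 0 ∧ ⟪α • b + β • s, α • b + β • s⟫ₗ = 0 := by
  have hss := lorentzForm_self_pos_of_orthogonal hb hbs hs
  have hsb : ⟪s, b⟫ₗ = 0 := by rw [lorentzForm_comm]; exact hbs
  refine ⟨√⟪s, s⟫ₗ, √(-⟪b, b⟫ₗ), fun h => ?_, ?_⟩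
  · have h := congrArg (⟪·, b⟫ₗ) h
    simp only [map_add, map_smul, LinearMap.add_apply, LinearMap.smul_apply, smul_eq_mul, hsb,
      mul_zero, add_zero, map_zero, LinearMap.zero_apply] at h
    exact (mul_ne_zero (Real.sqrt_pos.2 hss).ne' hb.ne) h
  · simp only [map_add, map_smul, LinearMap.add_apply, LinearMap.smul_apply, smul_eq_mul, hsb,
      hbs]
    have h1 := Real.mul_self_sqrt hss.le
    have h2 := Real.mul_self_sqrt (neg_nonneg.2 hb.le)
    linear_combination ⟪b, b⟫ₗ * h1 + ⟪s, s⟫ₗ * h2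

variable {V : Submodule ℝ (Fin (n + 1) → ℝ)}

theorem TimeLike.lorentzForm_self_pos_of_mem_orthogonal (hV : TimeLike V)
    {x : Fin (n + 1) → ℝ} (hx : x ∈ (lorentzForm n).orthogonal V) (hx0 : x ≠ 0) :
    0 < ⟪x, x⟫ₗ := by
  obtain ⟨τ, hτ, hττ⟩ := hV
  exact lorentzForm_self_pos_of_orthogonal hττ (hx τ hτ) hx0

theorem TimeLike.disjoint_orthogonal (hV : TimeLike V) :
    Disjoint V ((lorentzForm n).orthogonal V) := by
  refine Submodule.disjoint_def.2 fun x hxV hxW => ?_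
  by_contra hx0
  exact (hV.lorentzForm_self_pos_of_mem_orthogonal hxW hx0).ne' (hxW x hxV)

theorem timeLike_orthogonal_of_isCompl (h : IsCompl V ((lorentzForm n).orthogonal V))
    (hV : ¬ TimeLike V) : TimeLike ((lorentzForm n).orthogonal V) := by
  by_contra hW
  simp only [TimeLike, not_exists, not_and, not_lt] at hV hW
  obtain ⟨a, b, ha, hb, hab⟩ :=
    Submodule.codisjoint_iff_exists_add_eq.1 h.codisjoint (Pi.single 0 1)
  have hsplit : ⟪a + b, a + b⟫ₗ = ⟪a, a⟫ₗ + ⟪b, b⟫ₗ := by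
    simp only [map_add, LinearMap.add_apply, hb a ha, lorentzForm_comm b a]
    ring
  rw [hab, lorentzForm_single_zero] at hsplit
  have ha' : 0 ≤ ⟪a, a⟫ₗ := hV a ha
  have hb' : 0 ≤ ⟪b, b⟫ₗ := hW b hb
  linarith

theorem exists_null_mem_orthogonal_of_not_timeLike (hV : finrank ℝ V + 2 ≤ n + 1)
    (hT : ¬ TimeLike V) : ∃ u ≠ 0, ⟪u, u⟫ₗ = 0 ∧ u ∈ (lorentzForm n).orthogonal V := by
  by_cases hdis : Disjoint V ((lorentzForm n).orthogonal V)
  · obtain ⟨b, hbW, hb⟩ := timeLike_orthogonal_of_isCompl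
      ((LinearMap.BilinForm.isCompl_orthogonal_iff_disjoint lorentzForm_isRefl).2 hdis) hT
    have hrank : finrank ℝ ((lorentzForm n).orthogonal (V ⊔ ℝ ∙ b)) ≠ 0 := by
      rw [LinearMap.BilinForm.finrank_orthogonal lorentzForm_nondegenerate, finrank_fin_fun]
      have := Submodule.finrank_add_le_finrank_add_finrank V (ℝ ∙ b)
      rw [finrank_span_singleton (by rintro rfl; simp [lorentz] at hb)] at this
      omega
    obtain ⟨s, hs, hs0⟩ := Submodule.exists_mem_ne_zero_of_ne_bot
      (mt Submodule.finrank_eq_zero.2 hrank)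
    obtain ⟨α, β, hne, hnull⟩ := exists_lorentzForm_self_eq_zero_of_orthogonal hb
      (hs b (Submodule.mem_sup_right (Submodule.mem_span_singleton_self b))) hs0
    exact ⟨_, hne, hnull, add_mem (Submodule.smul_mem _ α hbW)
      (Submodule.smul_mem _ β (LinearMap.BilinForm.orthogonal_le le_sup_left hs))⟩
  · obtain ⟨u, hu, hu0⟩ := Submodule.exists_mem_ne_zero_of_ne_bot (mt disjoint_iff.2 hdis)
    exact ⟨u, hu0, hu.2 u hu.1, hu.2⟩

end LorentzForm

section HeadCombination

variable {E : Type*} [AddCommGroup E] [Module ℝ E] {j N : ℕ}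

def headCombination (h : j ≤ N) (w : Fin j → E) : (Fin N → ℝ) →ₗ[ℝ] E :=
  Fintype.linearCombination ℝ w ∘ₗ LinearMap.funLeft ℝ ℝ (Fin.castLE h)

theorem headCombination_apply (h : j ≤ N) (w : Fin j → E) (Z : Fin N → ℝ) :
    headCombination h w Z = ∑ m, Z (Fin.castLE h m) • w m := by
  simp [headCombination, Fintype.linearCombination_apply, LinearMap.funLeft_apply]

theorem headCombination_mem_span (h : j ≤ N) (w : Fin j → E) (Z : Fin N → ℝ) :
    headCombination h w Z ∈ Submodule.span ℝ (Set.range w) := by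
  rw [headCombination_apply]
  exact Submodule.sum_mem _ fun m _ => Submodule.smul_mem _ _ (Submodule.subset_span ⟨m, rfl⟩)

theorem headCombination_eq_zero_iff {h : j ≤ N} {w : Fin j → E} (hw : LinearIndependent ℝ w)
    {Z : Fin N → ℝ} : headCombination h w Z = 0 ↔ ∀ m, Z (Fin.castLE h m) = 0 := by
  rw [headCombination_apply]
  exact ⟨Fintype.linearIndependent_iff.1 hw _, fun hZ => by simp [hZ]⟩

theorem headCombination_single (h : j ≤ N) (w : Fin j → E) {i₀ : Fin N}
    (hi₀ : j ≤ (i₀ : ℕ)) (c : ℝ) : headCombination h w (Pi.single i₀ c) = 0 := by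
  rw [headCombination_apply]
  refine Finset.sum_eq_zero fun m _ => ?_
  rw [Pi.single_eq_of_ne (fun h' => ?_), zero_smul]
  have := congrArg Fin.val h'
  simp only [Fin.val_castLE] at this
  omega

end HeadCombination

section FoldNormalForm

variable {j k n : ℕ}

/-- The map `τ_{(j,k)} ∘ Φ_{j+1}`. -/
def foldNormalForm (j k n : ℕ) (hjn : j ≤ n) (x : Fin (n + 1) → ℝ) : Fin (k + 1) → ℝ :=
  fun i =>
    if h : (i : ℕ) < j then x ⟨(i : ℕ), by omega⟩
    else if (i : ℕ) = j then
      ∑ l ∈ Finset.univ.filter (fun l : Fin (n + 1) => j ≤ (l : ℕ)), x l ^ 2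
    else 0

theorem foldNormalForm_apply_self (hjn : j ≤ n) (hjk : j ≤ k) (x : Fin (n + 1) → ℝ) :
    foldNormalForm j k n hjn x ⟨j, by omega⟩ =
      ∑ l ∈ Finset.univ.filter (fun l : Fin (n + 1) => j ≤ (l : ℕ)), x l ^ 2 := by
  simp [foldNormalForm]

theorem foldNormalForm_apply_of_lt (hjn : j ≤ n) (x : Fin (n + 1) → ℝ) {i : Fin (k + 1)}
    (hi : j < (i : ℕ)) : foldNormalForm j k n hjn x i = 0 := by
  simp [foldNormalForm, hi.not_gt, hi.ne']

theorem headCombination_foldNormalForm {E : Type*} [AddCommGroup E] [Module ℝ E]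
    (hjn : j ≤ n) (hk : j ≤ k + 1) (hn : j ≤ n + 1) (w : Fin j → E) (x : Fin (n + 1) → ℝ) :
    headCombination hk w (foldNormalForm j k n hjn x) = headCombination hn w x := by
  simp only [headCombination_apply, foldNormalForm, Fin.val_castLE, Fin.is_lt, ↓reduceDIte]
  rfl

theorem continuous_foldNormalForm (hjn : j ≤ n) : Continuous (foldNormalForm j k n hjn) := by
  refine continuous_pi fun i => ?_
  unfold foldNormalForm
  split_ifs <;> fun_prop

theorem norm_le_norm_foldNormalForm_add_one (hjn : j ≤ n) (hjk : j ≤ k)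
    (x : Fin (n + 1) → ℝ) : ‖x‖ ≤ ‖foldNormalForm j k n hjn x‖ + 1 := by
  set z := foldNormalForm j k n hjn x
  refine (pi_norm_le_iff_of_nonneg (by positivity)).2 fun l => ?_
  rw [Real.norm_eq_abs]
  by_cases hl : (l : ℕ) < j
  · have h := norm_le_pi_norm z ⟨l, by omega⟩
    simp only [z, foldNormalForm, hl, dif_pos, Real.norm_eq_abs] at h
    linarith
  · have h1 : x l ^ 2 ≤ z ⟨j, by omega⟩ := by
      simp only [z, foldNormalForm_apply_self hjn hjk]
      exact Finset.single_le_sum (fun l _ => sq_nonneg (x l))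
        (by simp only [Finset.mem_filter, Finset.mem_univ, true_and]; omega)
    have h2 : z ⟨j, by omega⟩ ≤ ‖z‖ := (le_abs_self _).trans (norm_le_pi_norm z _)
    nlinarith [abs_nonneg (x l), sq_abs (x l), norm_nonneg z]

theorem isCompact_foldNormalForm_preimage_singleton (hjn : j ≤ n) (hjk : j ≤ k)
    (z : Fin (k + 1) → ℝ) : IsCompact (foldNormalForm j k n hjn ⁻¹' {z}) :=
  Metric.isCompact_of_isClosed_isBounded
    (isClosed_singleton.preimage (continuous_foldNormalForm hjn))
    (isBounded_iff_forall_norm_le.2 ⟨‖z‖ + 1, fun x hx => by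
      rw [← Set.mem_singleton_iff.1 hx]
      exact norm_le_norm_foldNormalForm_add_one hjn hjk x⟩)

end FoldNormalForm

section NotTimeLike

variable {k n : ℕ} (p : Fin (k + 1) → Fin (n + 1) → ℝ)

theorem sub_mem_recSub (i : Fin (k + 1)) : p i - p 0 ∈ recSub p := by
  cases i using Fin.cases with
  | zero => simp
  | succ i => exact Submodule.subset_span ⟨i, rfl⟩

theorem lorentzDistSqMap_add_apply (y : Fin (n + 1) → ℝ) (i : Fin (k + 1)) :
    lorentzDistSqMap p (y + p 0) i =
      ⟪y, y⟫ₗ - 2 * ⟪y, p i - p 0⟫ₗ + ⟪p i - p 0, p i - p 0⟫ₗ := by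
  have : y + p 0 - p i = y - (p i - p 0) := by abel
  change ⟪y + p 0 - p i, y + p 0 - p i⟫ₗ = _
  set v := p i - p 0
  rw [this]
  simp only [map_sub, LinearMap.sub_apply, lorentzForm_comm v y]
  ring

theorem not_isCompact_lorentzDistSqMap_preimage {u : Fin (n + 1) → ℝ} (hu : u ≠ 0)
    (huu : ⟪u, u⟫ₗ = 0) (huV : u ∈ (lorentzForm n).orthogonal (recSub p)) :
    ¬ IsCompact (lorentzDistSqMap p ⁻¹' {lorentzDistSqMap p (p 0)}) := by
  intro hK
  obtain ⟨m, hm⟩ := Function.ne_iff.1 hu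
  have hline : ∀ t : ℝ, lorentzDistSqMap p (t • u + p 0) = lorentzDistSqMap p (p 0) := by
    intro t
    funext i
    have h0 := lorentzDistSqMap_add_apply p 0 i
    rw [zero_add] at h0
    have hui : ⟪u, p i - p 0⟫ₗ = 0 := by
      rw [lorentzForm_comm]; exact huV _ (sub_mem_recSub p i)
    simp [lorentzDistSqMap_add_apply, h0, huu, hui]
  refine not_bddAbove_univ ((hK.image (continuous_apply m)).bddAbove.mono fun r _ =>
    (Set.mem_image _ _ _).2 ⟨((r - p 0 m) / u m) • u + p 0, hline _, ?_⟩)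
  simp [div_mul_cancel₀ _ hm]

theorem timeLike_of_aequiv_of_isCompact_preimage (hV : finrank ℝ (recSub p) < n)
    {g : (Fin (n + 1) → ℝ) → Fin (k + 1) → ℝ} (hg : ∀ z, IsCompact (g ⁻¹' {z}))
    (h : AEquiv (lorentzDistSqMap p) g) : TimeLike (recSub p) := by
  by_contra hT
  obtain ⟨u, hu, huu, huV⟩ := exists_null_mem_orthogonal_of_not_timeLike (by omega) hT
  exact not_isCompact_lorentzDistSqMap_preimage p hu huu huV
    (h.isCompact_preimage_singleton hg _)

end NotTimeLike

section TimeLike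

variable {j k n : ℕ}

theorem TimeLike.exists_orthonormal_orthogonal {w : Fin j → Fin (n + 1) → ℝ}
    (hw : LinearIndependent ℝ w) (hT : TimeLike (Submodule.span ℝ (Set.range w))) :
    ∃ e : {l : Fin (n + 1) // j ≤ (l : ℕ)} → Fin (n + 1) → ℝ,
      (∀ l, e l ∈ (lorentzForm n).orthogonal (Submodule.span ℝ (Set.range w))) ∧
        ∀ l l', ⟪e l, e l'⟫ₗ = if l = l' then 1 else 0 := by
  refine LinearMap.BilinForm.exists_orthonormal_of_pos
    (LinearMap.BilinForm.isSymm_def.2 lorentzForm_comm)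
    (fun x hx hx0 => hT.lorentzForm_self_pos_of_mem_orthogonal hx hx0) ?_
  rw [LinearMap.BilinForm.finrank_orthogonal lorentzForm_nondegenerate, finrank_fin_fun,
    finrank_span_eq_card hw, Fintype.card_fin]
  simp_rw [← not_lt]
  rw [Fintype.card_subtype_compl, Fintype.card_subtype, Fin.card_filter_val_lt, Fintype.card_fin]
  omega

/-- `T y = ∑_{l < j} y_l w_l + ∑_{l ≥ j} y_l e_l`, with `(e_l)` orthonormal and orthogonal
to the `w_m`. -/
theorem TimeLike.exists_linearEquiv (hjn : j ≤ n + 1) {w : Fin j → Fin (n + 1) → ℝ}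
    (hw : LinearIndependent ℝ w) (hT : TimeLike (Submodule.span ℝ (Set.range w))) :
    ∃ T : (Fin (n + 1) → ℝ) ≃ₗ[ℝ] (Fin (n + 1) → ℝ), ∀ y,
      ⟪T y, T y⟫ₗ = ⟪headCombination hjn w y, headCombination hjn w y⟫ₗ +
          ∑ l ∈ Finset.univ.filter (fun l : Fin (n + 1) => j ≤ (l : ℕ)), y l ^ 2 ∧
        ∀ v ∈ Submodule.span ℝ (Set.range w), ⟪T y, v⟫ₗ = ⟪headCombination hjn w y, v⟫ₗ := by
  obtain ⟨e, heW, he⟩ := hT.exists_orthonormal_orthogonal hw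
  set R := Fintype.linearCombination ℝ e ∘ₗ LinearMap.funLeft ℝ ℝ Subtype.val
  have hR : ∀ y, R y = ∑ l : {l : Fin (n + 1) // j ≤ (l : ℕ)}, y l • e l := fun y => by
    simp only [R, LinearMap.comp_apply, Fintype.linearCombination_apply, LinearMap.funLeft_apply]
  have hRW : ∀ y, R y ∈ (lorentzForm n).orthogonal (Submodule.span ℝ (Set.range w)) :=
    fun y => hR y ▸ Submodule.sum_mem _ fun l _ => Submodule.smul_mem _ _ (heW l)
  have hRe : ∀ y l, ⟪R y, e l⟫ₗ = y l := fun y l => by simp [hR, he]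
  have hinj : Function.Injective (headCombination hjn w + R) := by
    rw [← LinearMap.ker_eq_bot, LinearMap.ker_eq_bot']
    intro y hy
    have htail : ∀ l : {l : Fin (n + 1) // j ≤ (l : ℕ)}, y l = 0 := fun l => by
      simpa [hRe, heW l _ (headCombination_mem_span hjn w y)] using congrArg (⟪·, e l⟫ₗ) hy
    have hhead : headCombination hjn w y = 0 := by
      have hRy : R y = 0 := by simp [hR, htail]
      simpa [hRy] using hy
    rw [headCombination_eq_zero_iff hw] at hhead
    funext l
    by_cases hl : (l : ℕ) < j
    · exact hhead ⟨l, hl⟩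
    · exact htail ⟨l, not_lt.1 hl⟩
  refine ⟨LinearEquiv.ofInjectiveEndo _ hinj, fun y => ⟨?_, fun v hv => ?_⟩⟩
  all_goals simp only [LinearEquiv.coe_ofInjectiveEndo, LinearMap.add_apply, map_add]
  · have hHR : ⟪headCombination hjn w y, R y⟫ₗ = 0 :=
      hRW y _ (headCombination_mem_span hjn w y)
    have hRR : ⟪R y, R y⟫ₗ =
        ∑ l ∈ Finset.univ.filter (fun l : Fin (n + 1) => j ≤ (l : ℕ)), y l ^ 2 := by
      rw [Finset.sum_subtype (F := inferInstance) (p := fun l : Fin (n + 1) => j ≤ (l : ℕ)) _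
        (fun l => by simp)]
      nth_rewrite 2 [hR]
      simp only [map_sum, map_smul, smul_eq_mul, hRe, sq]
    rw [lorentzForm_comm (R y), hHR, hRR]
    ring
  · rw [lorentzForm_comm (R y), hRW y v hv, add_zero]

variable (hjk : j ≤ k) (p : Fin (k + 1) → Fin (n + 1) → ℝ)

def firstDiffs : Fin j → Fin (n + 1) → ℝ := fun m => p ⟨(m : ℕ) + 1, by omega⟩ - p 0

def targetLinear : (Fin (k + 1) → ℝ) →ₗ[ℝ] (Fin (k + 1) → ℝ) :=
  LinearMap.pi fun i => LinearMap.proj ⟨j, by omega⟩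
    - 2 • ((lorentzForm n).flip (p i - p 0) ∘ₗ headCombination (by omega) (firstDiffs hjk p))
    + if j < (i : ℕ) then LinearMap.proj i else 0

theorem targetLinear_apply (Z : Fin (k + 1) → ℝ) (i : Fin (k + 1)) :
    targetLinear hjk p Z i = Z ⟨j, by omega⟩
      - 2 * ⟪headCombination (by omega) (firstDiffs hjk p) Z, p i - p 0⟫ₗ
      + if j < (i : ℕ) then Z i else 0 := by
  simp only [targetLinear, LinearMap.pi_apply, LinearMap.add_apply, LinearMap.sub_apply,
    LinearMap.smul_apply, LinearMap.comp_apply, LinearMap.proj_apply, nsmul_eq_mul,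
    Nat.cast_ofNat]
  split_ifs <;> simp

theorem targetLinear_injective (hw : LinearIndependent ℝ (firstDiffs hjk p))
    (hdisj : Disjoint (Submodule.span ℝ (Set.range (firstDiffs hjk p)))
      ((lorentzForm n).orthogonal (Submodule.span ℝ (Set.range (firstDiffs hjk p))))) :
    Function.Injective (targetLinear hjk p) := by
  rw [← LinearMap.ker_eq_bot, LinearMap.ker_eq_bot']
  intro Z hZ
  set H := headCombination (by omega : j ≤ k + 1) (firstDiffs hjk p)
  have hZi : ∀ i : Fin (k + 1), Z ⟨j, by omega⟩ - 2 * ⟪H Z, p i - p 0⟫ₗ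
      + (if j < (i : ℕ) then Z i else 0) = 0 := fun i => by
    simpa [targetLinear_apply] using congrFun hZ i
  have hZj : Z ⟨j, by omega⟩ = 0 := by simpa using hZi 0
  have hH : H Z = 0 := by
    refine Submodule.disjoint_def.1 hdisj _ (headCombination_mem_span _ _ _)
      (LinearMap.BilinForm.mem_orthogonal_span_range_iff.2 fun m => ?_)
    have := hZi ⟨m + 1, by omega⟩
    simp only [hZj, show ¬ j < (m : ℕ) + 1 by omega, if_false, add_zero, zero_sub, neg_eq_zero,
      mul_eq_zero, two_ne_zero, false_or] at this
    rw [lorentzForm_comm]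
    exact this
  have hhead := (headCombination_eq_zero_iff hw).1 hH
  funext i
  rcases lt_trichotomy (i : ℕ) j with h | h | h
  · exact hhead ⟨i, h⟩
  · exact (congrArg Z (Fin.ext h)).trans hZj
  · simpa [hZj, hH, h] using hZi i

theorem aequiv_foldNormalForm_of_timeLike (hjn : j ≤ n)
    (hw : LinearIndependent ℝ (firstDiffs hjk p))
    (hV : Submodule.span ℝ (Set.range (firstDiffs hjk p)) = recSub p)
    (hT : TimeLike (recSub p)) : AEquiv (lorentzDistSqMap p) (foldNormalForm j k n hjn) := by
  rw [← hV] at hT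
  obtain ⟨T, hTT⟩ := hT.exists_linearEquiv (by omega) hw
  have hshear := isSmoothDiffeo_add_single ⟨j, by omega⟩ (contDiff_lorentzForm_self.comp
    (LinearMap.toContinuousLinearMap
      (headCombination (by omega : j ≤ k + 1) (firstDiffs hjk p))).contDiff)
    (fun Z c => by simp [headCombination_single])
  -- `L(T y + p₀)` is read off `Z = τ(Φ(y))`: the shear adds the quadratic form on `V` to
  -- `Z_j`, and `targetLinear` followed by a translation rebuilds the `L_i`
  refine AEquiv.of_comp_eq_comp ((isSmoothDiffeo_add_const (p 0)).comp T.isSmoothDiffeo)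
    ((isSmoothDiffeo_add_const fun i => ⟪p i - p 0, p i - p 0⟫ₗ).comp
      ((LinearEquiv.ofInjectiveEndo _
        (targetLinear_injective hjk p hw hT.disjoint_orthogonal)).isSmoothDiffeo.comp hshear)) ?_
  funext y i
  simp only [Function.comp_apply, LinearEquiv.coe_ofInjectiveEndo, Pi.add_apply,
    targetLinear_apply, lorentzDistSqMap_add_apply]
  simp only [map_add, headCombination_single, le_refl, add_zero,
    headCombination_foldNormalForm hjn _ (by omega : j ≤ n + 1), (hTT y).1,
    (hTT y).2 _ (hV ▸ sub_mem_recSub p i), foldNormalForm_apply_self hjn hjk,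
    LinearMap.coe_toContinuousLinearMap', Pi.single_eq_same]
  split_ifs with h
  · rw [foldNormalForm_apply_of_lt hjn y h, Pi.single_eq_of_ne (by rintro rfl; simp at h)]
    ring
  · ring

end TimeLike

/-- for positive integers `j < n`, `j ≤ k` and points `p₀,…,p_k ∈ ℝ^{1,n}`
with `dim V(p₀,…,p_k) = dim V(p₀,…,p_j) = j`, the mapping `L_{(p₀,…,p_k)}` is
`𝒜`-equivalent to `τ_{(j,k)} ∘ Φ_{j+1}` if and only if `V(p₀,…,p_k)` is time-like. -/
theorem lorentzDistSqMap_timeLike_iff {j k n : ℕ} (hjn : j < n) (hjk : j ≤ k)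
    (p : Fin (k + 1) → (Fin (n + 1) → ℝ))
    (hdim : Module.finrank ℝ (recSub p) = j)
    (hdimj : Module.finrank ℝ
      (Submodule.span ℝ
        (Set.range fun i : Fin j =>
          p ⟨(i : ℕ) + 1, by have := i.isLt; omega⟩ - p 0)) = j) :
    AEquiv (lorentzDistSqMap p)
      (fun (x : Fin (n + 1) → ℝ) (i : Fin (k + 1)) =>
        if h : (i : ℕ) < j then x ⟨(i : ℕ), by omega⟩
        else if (i : ℕ) = j then
          ∑ l ∈ Finset.univ.filter (fun l : Fin (n + 1) => j ≤ (l : ℕ)), x l ^ 2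
        else 0) ↔ TimeLike (recSub p) := by
  have hw : LinearIndependent ℝ (firstDiffs hjk p) :=
    linearIndependent_iff_card_eq_finrank_span.2 (by rw [Fintype.card_fin]; exact hdimj.symm)
  have hV : Submodule.span ℝ (Set.range (firstDiffs hjk p)) = recSub p :=
    Submodule.eq_of_le_of_finrank_le
      (Submodule.span_le.2 (Set.range_subset_iff.2 fun m => sub_mem_recSub p _))
      (hdim.trans hdimj.symm).le
  exact ⟨timeLike_of_aequiv_of_isCompact_preimage p (hdim ▸ hjn)
      (isCompact_foldNormalForm_preimage_singleton hjn.le hjk),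
    aequiv_foldNormalForm_of_timeLike hjk p hjn.le hw hV⟩
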